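/- Let d > 2 divide n−1 and let ζ be a primitive d-th root of unity. Then Cat_n(ζ) = C(2(n−1)/d, (n−1)/d). -/

import Mathlib

open scoped Classical

noncomputable def qInt {K : Type*} [Field K] (q : K) (n : ℕ) : K :=
  ∑ i ∈ Finset.range n, q ^ i

noncomputable def qFact {K : Type*} [Field K] (q : K) (n : ℕ) : K :=
  ∏ i ∈ Finset.range n, qInt q (i + 1)

noncomputable def qBinom {K : Type*} [Field K] (q : K) (n k : ℕ) : K :=
  qFact q n / (qFact q k * qFact q (n - k))

noncomputable def qCat {K : Type*} [Field K] (q : K) (n : ℕ) : K :=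
  qBinom q (2 * n) n / qInt q (n + 1)

/-!
Clearing denominators, `Cat_n(q) · ([n]_q!)² · [n+1]_q = [2n]_q!`. Over `ℚ[X]`, pull the factor
`[d]_q` out of every `[k]_q` with `d ∣ k`, using `[jd]_q = [j]_{q^d} · [d]_q`; when `2n` has
no carry modulo `d`, both sides lose the same power of `[d]_q`. At `ζ` the cofactor `[j]_{q^d}`
becomes `j`, while `[jd + r]_ζ = [r]_ζ ≠ 0` for `0 < r < d`, so the reduced factorial of
`jd + r` evaluates to `j! · ([d-1]_ζ!)^j · [r]_ζ!`. For `n = md + 1` the identity becomes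
`Cat_n(ζ) · (m!)² · [2]_ζ = (2m)! · [2]_ζ`, up to the nonzero factor `([d-1]_ζ!)^{2m}`.
-/

open Polynomial Finset
open scoped Nat

section Field

variable {K : Type*} [Field K]

theorem qCat_mul_eq_qFact {q : K} {n : ℕ} (hfact : qFact q n ≠ 0)
    (hint : qInt q (n + 1) ≠ 0) :
    qCat q n * (qFact q n ^ 2 * qInt q (n + 1)) = qFact q (2 * n) := by
  rw [qCat, qBinom, two_mul, Nat.add_sub_cancel]
  field_simp

theorem qFact_succ (q : K) (n : ℕ) : qFact q (n + 1) = qFact q n * qInt q (n + 1) :=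
  prod_range_succ _ n

theorem qFact_one (q : K) : qFact q 1 = 1 := by
  simp [qFact, qInt]

theorem qInt_one_left (n : ℕ) : qInt (1 : K) n = n := by
  simp [qInt]

namespace IsPrimitiveRoot

variable {ζ : K} {d : ℕ}

theorem qInt_eq_zero_iff (hζ : IsPrimitiveRoot ζ d) (hd : 1 < d) (l : ℕ) :
    qInt ζ l = 0 ↔ d ∣ l := by
  have hζ1 : ζ ≠ 1 := hζ.ne_one hd
  rw [qInt, geom_sum_eq hζ1, div_eq_zero_iff, sub_eq_zero, hζ.pow_eq_one_iff_dvd,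
    or_iff_left (sub_ne_zero.mpr hζ1)]

theorem qInt_mul_add (hζ : IsPrimitiveRoot ζ d) (hd : 1 < d) (j r : ℕ) :
    qInt ζ (j * d + r) = qInt ζ r := by
  simp only [qInt, geom_sum_eq (hζ.ne_one hd), pow_add, pow_mul', hζ.pow_eq_one, one_pow,
    one_mul]

theorem qFact_ne_zero (hζ : IsPrimitiveRoot ζ d) (hd : 1 < d) {r : ℕ} (hr : r < d) :
    qFact ζ r ≠ 0 :=
  prod_ne_zero_iff.mpr fun k hk ↦ by
    rw [Ne, hζ.qInt_eq_zero_iff hd]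
    exact Nat.not_dvd_of_pos_of_lt k.succ_pos (by simp at hk; omega)

end IsPrimitiveRoot

end Field

namespace Polynomial

variable (R : Type*) [CommSemiring R]

noncomputable def qIntPoly (k : ℕ) : R[X] := ∑ i ∈ range k, X ^ i

noncomputable def qFactPoly (N : ℕ) : R[X] := ∏ k ∈ range N, qIntPoly R (k + 1)

/-- `[k]_q / [d]_q = [k/d]_{q^d}` when `d ∣ k`, and `[k]_q` otherwise. -/
noncomputable def qIntPolyDiv (d k : ℕ) : R[X] :=
  if d ∣ k then (qIntPoly R (k / d)).comp (X ^ d) else qIntPoly R k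

noncomputable def qFactPolyDiv (d N : ℕ) : R[X] := ∏ k ∈ range N, qIntPolyDiv R d (k + 1)

variable {R}

theorem qIntPoly_monic [Nontrivial R] {k : ℕ} (hk : k ≠ 0) : (qIntPoly R k).Monic :=
  monic_geom_sum_X hk

theorem qFactPoly_monic [Nontrivial R] (N : ℕ) : (qFactPoly R N).Monic :=
  monic_prod_of_monic _ _ fun k _ ↦ qIntPoly_monic k.succ_ne_zero

theorem qIntPoly_add (a b : ℕ) : qIntPoly R (a + b) = qIntPoly R a + X ^ a * qIntPoly R b := by
  simp only [qIntPoly, sum_range_add, pow_add, mul_sum]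

theorem qIntPoly_mul (j d : ℕ) :
    qIntPoly R (j * d) = (qIntPoly R j).comp (X ^ d) * qIntPoly R d := by
  induction j with
  | zero => simp [qIntPoly]
  | succ j ih =>
    rw [add_one_mul, qIntPoly_add, ih, qIntPoly_add, add_comp, add_mul, mul_comm j d, pow_mul]
    simp [qIntPoly]

theorem qIntPoly_eq_mul_qIntPolyDiv (d k : ℕ) :
    qIntPoly R k = (if d ∣ k then qIntPoly R d else 1) * qIntPolyDiv R d k := by
  unfold qIntPolyDiv
  split_ifs with h
  · rw [mul_comm, ← qIntPoly_mul, Nat.div_mul_cancel h]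
  · rw [one_mul]

theorem qFactPoly_eq_pow_mul_qFactPolyDiv (d N : ℕ) :
    qFactPoly R N = qIntPoly R d ^ (N / d) * qFactPolyDiv R d N := by
  rw [qFactPoly, qFactPolyDiv, ← Nat.card_multiples, ← prod_const, prod_filter,
    ← prod_mul_distrib]
  exact prod_congr rfl fun k _ ↦ qIntPoly_eq_mul_qIntPolyDiv d (k + 1)

theorem aeval_qIntPoly {L : Type*} [Field L] [Algebra R L] (x : L) (k : ℕ) :
    aeval x (qIntPoly R k) = qInt x k := by
  simp [qIntPoly, qInt]

theorem aeval_qFactPoly {L : Type*} [Field L] [Algebra R L] (x : L) (N : ℕ) :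
    aeval x (qFactPoly R N) = qFact x N := by
  simp [qFactPoly, qFact, aeval_qIntPoly]

theorem algebraMap_qIntPoly {K : Type*} [Field K] (k : ℕ) :
    algebraMap K[X] (RatFunc K) (qIntPoly K k) = qInt RatFunc.X k := by
  rw [← RatFunc.aeval_X_left_eq_algebraMap, aeval_qIntPoly]

theorem algebraMap_qFactPoly {K : Type*} [Field K] (N : ℕ) :
    algebraMap K[X] (RatFunc K) (qFactPoly K N) = qFact RatFunc.X N := by
  rw [← RatFunc.aeval_X_left_eq_algebraMap, aeval_qFactPoly]

theorem mul_qFactPoly_eq_of_algebraMap_eq_qCat {K : Type*} [Field K] {P : K[X]} {n : ℕ}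
    (hP : algebraMap K[X] (RatFunc K) P = qCat RatFunc.X n) :
    P * (qFactPoly K n ^ 2 * qIntPoly K (n + 1)) = qFactPoly K (2 * n) := by
  have hinj := RatFunc.algebraMap_injective K
  apply hinj
  rw [map_mul, map_mul, map_pow, hP, algebraMap_qFactPoly, algebraMap_qFactPoly,
    algebraMap_qIntPoly]
  refine qCat_mul_eq_qFact ?_ ?_
  · rw [← algebraMap_qFactPoly, map_ne_zero_iff _ hinj]
    exact (qFactPoly_monic n).ne_zero
  · rw [← algebraMap_qIntPoly, map_ne_zero_iff _ hinj]
    exact (qIntPoly_monic n.succ_ne_zero).ne_zero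

theorem mul_qFactPolyDiv_eq {R : Type*} [CommRing R] [Nontrivial R] {P : R[X]} {n d : ℕ}
    (hd : 0 < d) (hcarry : 2 * n / d = 2 * (n / d))
    (h : P * (qFactPoly R n ^ 2 * qIntPoly R (n + 1)) = qFactPoly R (2 * n)) :
    P * (qFactPolyDiv R d n ^ 2 * qIntPoly R (n + 1)) = qFactPolyDiv R d (2 * n) := by
  rw [qFactPoly_eq_pow_mul_qFactPolyDiv d n, qFactPoly_eq_pow_mul_qFactPolyDiv d (2 * n),
    hcarry] at h
  apply ((qIntPoly_monic (R := R) hd.ne').pow (2 * (n / d))).isRegular.left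
  linear_combination h

section RootOfUnity

variable {L : Type*} [Field L] [Algebra R L] {ζ : L} {d : ℕ}

theorem aeval_qIntPolyDiv (hζ : IsPrimitiveRoot ζ d) (k : ℕ) :
    aeval ζ (qIntPolyDiv R d k) = if d ∣ k then ((k / d : ℕ) : L) else qInt ζ k := by
  unfold qIntPolyDiv
  split_ifs
  · rw [aeval_comp, map_pow, aeval_X, hζ.pow_eq_one, aeval_qIntPoly, qInt_one_left]
  · exact aeval_qIntPoly ζ k

theorem aeval_qIntPolyDiv_mul_add (hζ : IsPrimitiveRoot ζ d) (hd : 1 < d) (j : ℕ) {t : ℕ}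
    (ht : 0 < t) (htd : t < d) : aeval ζ (qIntPolyDiv R d (j * d + t)) = qInt ζ t := by
  rw [aeval_qIntPolyDiv hζ, if_neg, hζ.qInt_mul_add hd]
  rw [Nat.dvd_add_right (dvd_mul_left d j)]
  exact Nat.not_dvd_of_pos_of_lt ht htd

theorem aeval_qIntPolyDiv_mul (hζ : IsPrimitiveRoot ζ d) (hd : 0 < d) (j : ℕ) :
    aeval ζ (qIntPolyDiv R d (j * d)) = j := by
  rw [aeval_qIntPolyDiv hζ, if_pos (dvd_mul_left d j), Nat.mul_div_cancel j hd]

theorem aeval_qFactPolyDiv (hζ : IsPrimitiveRoot ζ d) (hd : 1 < d) (j : ℕ) {r : ℕ}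
    (hr : r < d) :
    aeval ζ (qFactPolyDiv R d (j * d + r)) = (j ! : L) * qFact ζ (d - 1) ^ j * qFact ζ r := by
  have htail : ∀ i r, r < d →
      ∏ s ∈ range r, aeval ζ (qIntPolyDiv R d (i * d + s + 1)) = qFact ζ r :=
    fun i r hr ↦ prod_congr rfl fun s hs ↦
      aeval_qIntPolyDiv_mul_add hζ hd i s.succ_pos (by simp at hs; omega)
  have hblock : ∀ i, ∏ s ∈ range d, aeval ζ (qIntPolyDiv R d (i * d + s + 1)) =
      qFact ζ (d - 1) * (i + 1 : ℕ) := by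
    intro i
    obtain ⟨e, rfl⟩ : ∃ e, d = e + 1 := ⟨d - 1, by omega⟩
    rw [prod_range_succ, htail i e (by omega), show i * (e + 1) + e + 1 = (i + 1) * (e + 1) by ring,
      aeval_qIntPolyDiv_mul hζ e.succ_pos, Nat.add_sub_cancel]
  have hblocks : ∀ j, aeval ζ (qFactPolyDiv R d (j * d)) = (j ! : L) * qFact ζ (d - 1) ^ j := by
    intro j
    induction j with
    | zero => simp [qFactPolyDiv]
    | succ j ih =>
      rw [qFactPolyDiv, add_one_mul, prod_range_add, map_mul, ← qFactPolyDiv, ih, map_prod]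
      simp only [hblock, Nat.factorial_succ]
      push_cast
      ring
  rw [qFactPolyDiv, prod_range_add, map_mul, ← qFactPolyDiv, hblocks, map_prod, htail j r hr]

end RootOfUnity

end Polynomial

theorem qCatalan_at_primitive_root (n d : ℕ) (hn : 1 ≤ n) (hd : 2 < d)
    (hdn : d ∣ n - 1) (ζ : ℂ) (hζ : IsPrimitiveRoot ζ d)
    (P : Polynomial ℚ)
    (hP : algebraMap (Polynomial ℚ) (RatFunc ℚ) P = qCat (RatFunc.X : RatFunc ℚ) n) :
    Polynomial.aeval ζ P = (((2 * (n - 1) / d).choose ((n - 1) / d) : ℕ) : ℂ) := by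
  obtain ⟨m, hm⟩ := hdn
  have hd0 : 0 < d := by omega
  have hn' : n = d * m + 1 := by omega
  have h2n : 2 * n = d * (2 * m) + 2 := by rw [hn']; ring
  have hdiv : ∀ j r, r < d → (d * j + r) / d = j := fun j r hr ↦ by
    rw [Nat.mul_add_div hd0, Nat.div_eq_of_lt hr, add_zero]
  have hred := mul_qFactPolyDiv_eq hd0 (by rw [h2n, hdiv _ 2 hd, hn', hdiv _ 1 (by omega)])
    (mul_qFactPoly_eq_of_algebraMap_eq_qCat hP)
  have heval := congrArg (aeval ζ) hred
  rw [map_mul, map_mul, map_pow, aeval_qIntPoly, h2n, hn', mul_comm d, mul_comm d, add_assoc,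
    hζ.qInt_mul_add (by omega), aeval_qFactPolyDiv hζ (by omega) _ (by omega),
    aeval_qFactPolyDiv hζ (by omega) _ hd, qFact_one, qFact_succ ζ 1, qFact_one] at heval
  have hQ : qFact ζ (d - 1) ≠ 0 := hζ.qFact_ne_zero (by omega) (by omega)
  have h2 : qInt ζ (1 + 1) ≠ 0 := by
    rw [Ne, hζ.qInt_eq_zero_iff (by omega)]
    exact Nat.not_dvd_of_pos_of_lt (by omega) hd
  have hchoose : ((2 * m).choose m * m ! * m ! : ℂ) = (2 * m)! := by
    exact_mod_cast two_mul m ▸ Nat.add_choose_mul_factorial_mul_factorial m m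
  rw [hm, mul_left_comm, Nat.mul_div_cancel_left _ hd0, Nat.mul_div_cancel_left _ hd0]
  have hcancel : (m ! : ℂ) ^ 2 * qFact ζ (d - 1) ^ (2 * m) * qInt ζ (1 + 1) ≠ 0 := by
    simp [hQ, h2, m.factorial_ne_zero]
  apply mul_right_cancel₀ hcancel
  linear_combination heval - qFact ζ (d - 1) ^ (2 * m) * qInt ζ (1 + 1) * hchoose
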